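/- arXiv:2406.03775 — 2 statements merged into one kernel-verified Lean document; each statement's English description precedes it below -/
import Mathlib

section
/- Let d ≥ 1, N ≥ 1, and let B_1, …, B_N, C_1, …, C_N ∈ M_d(ℂ) satisfy Σ_{j=1}^{N} B_j† A B_j = Σ_{j=1}^{N} C_j† A C_j for every A ∈ M_d(ℂ). Then there exists a unitary N×N complex matrix (u_{jk})_{j,k=1}^{N} such that C_j = Σ_{k=1}^{N} u_{jk} B_k for every j = 1, …, N. -/
/-!
Evaluating the hypothesis at the matrix units `single p q 1` shows that the vectors
`(B_j p x)_j ∈ ℂ^N`, indexed by the entry `(p, x)`, have the same Gram matrix as the vectors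
`(C_j p x)_j`. Families with equal Gram matrices differ by a unitary: `∑ c_a v_a ↦ ∑ c_a w_a` is
well defined and isometric on the span of the `v_a`, and extends to an isometry of the whole space.
The matrix of that isometry is `u`.
-/

open scoped Matrix InnerProductSpace

namespace LinearMap

variable {𝕜 M E : Type*} [RCLike 𝕜] [AddCommGroup M] [Module 𝕜 M]
  [NormedAddCommGroup E] [InnerProductSpace 𝕜 E] [FiniteDimensional 𝕜 E]

theorem exists_linearIsometryEquiv_comp_eq_of_inner_eq {T S : M →ₗ[𝕜] E}
    (h : ∀ x y, ⟪T x, T y⟫_𝕜 = ⟪S x, S y⟫_𝕜) :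
    ∃ U : E ≃ₗᵢ[𝕜] E, ∀ x, U (T x) = S x := by
  have hker : ker T ≤ ker S := fun x hx ↦ by
    rw [mem_ker] at hx ⊢
    rw [← inner_self_eq_zero (𝕜 := 𝕜), ← h, hx, inner_zero_left]
  let f : range T →ₗ[𝕜] E := (ker T).liftQ S hker ∘ₗ T.quotKerEquivRange.symm.toLinearMap
  have hf : ∀ x, f ⟨T x, mem_range_self T x⟩ = S x := fun x ↦ by
    simp [f, T.quotKerEquivRange_symm_apply_image]
  have hf_inner : ∀ x y : range T, ⟪f x, f y⟫_𝕜 = ⟪x, y⟫_𝕜 := by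
    rintro ⟨_, x, rfl⟩ ⟨_, y, rfl⟩
    rw [hf, hf, Submodule.coe_inner, h]
  let L : range T →ₗᵢ[𝕜] E := f.isometryOfInner hf_inner
  refine ⟨L.extend.toLinearIsometryEquiv rfl, fun x ↦ ?_⟩
  rw [LinearIsometry.toLinearIsometryEquiv_apply]
  exact (L.extend_apply ⟨T x, mem_range_self T x⟩).trans (hf x)

end LinearMap

open Matrix

theorem exists_linearIsometryEquiv_apply_eq_of_gram_eq {𝕜 E ι : Type*} [RCLike 𝕜]
    [NormedAddCommGroup E] [InnerProductSpace 𝕜 E] [FiniteDimensional 𝕜 E]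
    {v w : ι → E} (h : gram 𝕜 v = gram 𝕜 w) :
    ∃ U : E ≃ₗᵢ[𝕜] E, ∀ i, U (v i) = w i := by
  have hvw : ∀ i j, ⟪v i, v j⟫_𝕜 = ⟪w i, w j⟫_𝕜 := fun i j ↦ by
    simpa only [gram_apply] using congr_fun₂ h i j
  obtain ⟨U, hU⟩ := LinearMap.exists_linearIsometryEquiv_comp_eq_of_inner_eq
    (T := Finsupp.linearCombination 𝕜 v) (S := Finsupp.linearCombination 𝕜 w) fun x y ↦ by
      simp [Finsupp.linearCombination_apply, Finsupp.sum, sum_inner, inner_sum,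
        inner_smul_left, inner_smul_right, hvw]
  exact ⟨U, fun i ↦ by simpa using hU (Finsupp.single i 1)⟩

namespace Matrix

variable {𝕜 m n : Type*} [RCLike 𝕜] [Fintype m]

theorem conjTranspose_mul_self_eq_gram (X : Matrix m n 𝕜) :
    Xᴴ * X = gram 𝕜 fun j ↦ WithLp.toLp 2 (Xᵀ j) := by
  ext i j
  simp [gram_apply, EuclideanSpace.inner_eq_star_dotProduct, mul_apply, dotProduct, mul_comm]

theorem exists_mem_unitaryGroup_eq_mul_of_conjTranspose_mul_self_eq [DecidableEq m]
    {X Y : Matrix m n 𝕜} (h : Xᴴ * X = Yᴴ * Y) : ∃ u ∈ unitaryGroup m 𝕜, Y = u * X := by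
  rw [conjTranspose_mul_self_eq_gram, conjTranspose_mul_self_eq_gram] at h
  obtain ⟨U, hU⟩ := exists_linearIsometryEquiv_apply_eq_of_gram_eq h
  let e : Matrix m m 𝕜 ≃⋆ₐ[𝕜] (EuclideanSpace 𝕜 m →L[𝕜] EuclideanSpace 𝕜 m) := toEuclideanCLM
  let u := Unitary.linearIsometryEquiv.symm U
  refine ⟨e.symm u, Unitary.map_mem _ u.2, ?_⟩
  ext i j
  calc Y i j = e (e.symm u) (WithLp.toLp 2 (Xᵀ j)) i := by
        rw [StarAlgEquiv.apply_symm_apply]; exact congr_fun (congrArg WithLp.ofLp (hU j)).symm i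
    _ = (e.symm u * X) i j := by rw [toEuclideanCLM_toLp]; rfl

theorem mul_single_mul_apply {α l o : Type*} [NonUnitalNonAssocSemiring α] [DecidableEq m]
    (M : Matrix l m α) (i j : m) (c : α) (N : Matrix m o α) (a : l) (b : o) :
    (M * single i j c * N) a b = M a i * c * N j b := by
  simp [mul_apply, single_apply, ite_and]

variable {ι : Type*} [Fintype ι] [DecidableEq m]

theorem conjTranspose_mul_self_of_vec_apply (B : ι → Matrix m n 𝕜) (a b : n × m) :
    ((of fun j ↦ (B j).vec)ᴴ * of (fun j ↦ (B j).vec)) a b =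
      (∑ j, (B j)ᴴ * single a.2 b.2 (1 : 𝕜) * B j) a.1 b.1 := by
  simp only [sum_apply, mul_single_mul_apply, conjTranspose_apply, mul_one]
  simp [mul_apply, vec]

theorem exists_mem_unitaryGroup_eq_sum_smul_of_sum_conjTranspose_mul_mul_eq [DecidableEq ι]
    {B C : ι → Matrix m n 𝕜}
    (h : ∀ A : Matrix m m 𝕜, ∑ j, (B j)ᴴ * A * B j = ∑ j, (C j)ᴴ * A * C j) :
    ∃ u ∈ unitaryGroup ι 𝕜, ∀ j, C j = ∑ k, u j k • B k := by
  have hgram : (of fun j ↦ (B j).vec)ᴴ * of (fun j ↦ (B j).vec) =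
      (of fun j ↦ (C j).vec)ᴴ * of (fun j ↦ (C j).vec) := by
    ext a b
    rw [conjTranspose_mul_self_of_vec_apply, conjTranspose_mul_self_of_vec_apply, h]
  obtain ⟨u, hu, hCB⟩ := exists_mem_unitaryGroup_eq_mul_of_conjTranspose_mul_self_eq hgram
  refine ⟨u, hu, fun j ↦ vec_inj.mp ?_⟩
  ext a
  simpa [vec, vec_sum, vec_smul, sum_apply, mul_apply, mul_comm] using congr_fun₂ hCB j a

end Matrix

theorem kraus_unitary_freedom_general (d N : ℕ)
    (B C : Fin N → Matrix (Fin d) (Fin d) ℂ)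
    (h : ∀ A : Matrix (Fin d) (Fin d) ℂ,
      ∑ j, (B j)ᴴ * A * B j = ∑ j, (C j)ᴴ * A * C j) :
    ∃ u : Matrix (Fin N) (Fin N) ℂ, u ∈ Matrix.unitaryGroup (Fin N) ℂ ∧
      ∀ j, C j = ∑ k, u j k • B k :=
  Matrix.exists_mem_unitaryGroup_eq_sum_smul_of_sum_conjTranspose_mul_mul_eq h

/-- Unitary freedom of Kraus representations: if `(B_j)` and `(C_j)` are Kraus operators of
the same completely positive map, then they are related by a unitary matrix of coefficients. -/
theorem kraus_unitary_freedom (d N : ℕ) (hd : 1 ≤ d) (hN : 1 ≤ N)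
    (B C : Fin N → Matrix (Fin d) (Fin d) ℂ)
    (h : ∀ A : Matrix (Fin d) (Fin d) ℂ,
      ∑ j, (B j)ᴴ * A * B j = ∑ j, (C j)ᴴ * A * C j) :
    ∃ u : Matrix (Fin N) (Fin N) ℂ, u ∈ Matrix.unitaryGroup (Fin N) ℂ ∧
      ∀ j, C j = ∑ k, u j k • B k :=
  kraus_unitary_freedom_general d N B C h
end

section
/- Let d ≥ 1, N ≥ 1, and let L_1, …, L_N ∈ M_d(ℂ) satisfy the completeness condition Σ_{j=1}^{N} L_j† L_j = 1, and define the linear map Φ : M_d(ℂ) → M_d(ℂ) by Φ(A) = Σ_{j=1}^{N} L_j† A L_j. Set α_j := tr(L_j)/d, M_j := L_j − α_j·1, X := Σ_{j=1}^{N} conj(α_j)·L_j, X_I := (X − X†)/(2i), and Y := −X_I + (tr(X_I)/d)·1. Then Y is Hermitian with tr(Y) = 0, each M_j satisfies tr(M_j) = 0, and for every A ∈ M_d(ℂ): Φ(A) = A + i[Y,A] + Σ_{j=1}^{N} (M_j† A M_j − (1/2){M_j† M_j, A}). -/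
/-!
Substituting `L_j = M_j + α_j` gives `Σ M_j† A M_j = Φ(A) - X† A - A X + (Σ |α_j|²) A`, and at
`A = 1` completeness gives `Σ M_j† M_j = 1 - X† - X + Σ |α_j|²`. Subtracting half the
anticommutator cancels `Σ |α_j|²`, and what remains of the cross terms is `-½[X - X†, A]`,
the commutator with `-Im X = -(X - X†)/(2i)`. The scalar trace correction in `Y` is central, so it
only serves to make `Y` traceless.
-/

open scoped Matrix ComplexStarModule

namespace Matrix

variable {n 𝕜 : Type*} [Fintype n] [DecidableEq n] [Field 𝕜]

def tracelessPart (A : Matrix n n 𝕜) : Matrix n n 𝕜 :=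
  A - (A.trace / Fintype.card n) • 1

theorem trace_tracelessPart (hn : (Fintype.card n : 𝕜) ≠ 0) (A : Matrix n n 𝕜) :
    A.tracelessPart.trace = 0 := by
  rw [tracelessPart, trace_sub, trace_smul, trace_one, smul_eq_mul, div_mul_cancel₀ _ hn,
    sub_self]

theorem IsHermitian.tracelessPart [StarRing 𝕜] {A : Matrix n n 𝕜} (hA : A.IsHermitian) :
    A.tracelessPart.IsHermitian := by
  refine hA.sub ?_
  rw [IsHermitian, conjTranspose_smul, conjTranspose_one, star_div₀, star_natCast,
    ← trace_conjTranspose, hA.eq]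

end Matrix

theorem add_smul_one_mul_sub_mul_add_smul_one {K R : Type*} [CommSemiring K] [Ring R]
    [Algebra K R] (Y A : R) (c : K) :
    (Y + c • 1) * A - A * (Y + c • 1) = Y * A - A * Y := by
  simp only [add_mul, mul_add, smul_mul_assoc, mul_smul_comm, one_mul, mul_one]
  abel

theorem inv_two_mul_I_smul_sub_star {E : Type*} [AddCommGroup E] [Module ℂ E] [StarAddMonoid E]
    [StarModule ℂ E] (x : E) :
    (2 * Complex.I)⁻¹ • (x - star x) = ℑ x := by
  rw [imaginaryPart_apply_coe, ← Complex.coe_smul, smul_smul]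
  congr 1
  simp

section Kraus

variable {R ι : Type*} [Ring R] [StarRing R] [Algebra ℂ R] [StarModule ℂ R] [Fintype ι]
  {L : ι → R} {α : ι → ℂ}

variable (L α) in
theorem sum_star_sub_smul_one_mul_mul_sub_smul_one (A : R) :
    ∑ j, star (L j - α j • 1) * A * (L j - α j • 1) =
      ∑ j, star (L j) * A * L j - star (∑ j, starRingEnd ℂ (α j) • L j) * A
        - A * ∑ j, starRingEnd ℂ (α j) • L j + (∑ j, starRingEnd ℂ (α j) * α j) • A := by
  have expand (j : ι) : star (L j - α j • 1) * A * (L j - α j • 1) =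
      star (L j) * A * L j - star (starRingEnd ℂ (α j) • L j) * A
        - A * (starRingEnd ℂ (α j) • L j) + (starRingEnd ℂ (α j) * α j) • A := by
    simp only [star_sub, star_smul, star_one, sub_mul, mul_sub, smul_mul_assoc, mul_smul_comm,
      one_mul, mul_one, starRingEnd_apply, star_star]
    module
  simp only [expand, Finset.sum_add_distrib, Finset.sum_sub_distrib, star_sum, Finset.sum_mul,
    Finset.mul_sum, Finset.sum_smul]

theorem sum_star_mul_mul_eq_gksl (hL : ∑ j, star (L j) * L j = 1)
    {M : ι → R} (hM : ∀ j, M j = L j - α j • 1)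
    {X : R} (hX : X = ∑ j, starRingEnd ℂ (α j) • L j) (A : R) :
    ∑ j, star (L j) * A * L j = A + Complex.I • (-(ℑ X : R) * A - A * -(ℑ X : R)) +
      ∑ j, (star (M j) * A * M j -
        (2 : ℂ)⁻¹ • (star (M j) * M j * A + A * (star (M j) * M j))) := by
  have hS := sum_star_sub_smul_one_mul_mul_sub_smul_one L α A
  have hT := sum_star_sub_smul_one_mul_mul_sub_smul_one L α 1
  simp only [mul_one, one_mul, hL] at hT
  simp only [← hM, ← hX] at hS hT
  rw [Finset.sum_sub_distrib, ← Finset.smul_sum, Finset.sum_add_distrib, ← Finset.sum_mul,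
    ← Finset.mul_sum, hS, hT, imaginaryPart_apply_coe]
  simp only [sub_mul, mul_sub, add_mul, mul_add, neg_mul, mul_neg, smul_mul_assoc,
    mul_smul_comm, one_mul, mul_one]
  match_scalars <;> ring_nf <;> simp only [Complex.I_sq] <;> ring

end Kraus

theorem unital_kraus_gksl_normal_form_general (d N : ℕ) (hd : 1 ≤ d)
    (L : Fin N → Matrix (Fin d) (Fin d) ℂ)
    (hcomplete : ∑ j, (L j)ᴴ * L j = 1)
    (Φ : Matrix (Fin d) (Fin d) ℂ → Matrix (Fin d) (Fin d) ℂ)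
    (hΦ : ∀ A, Φ A = ∑ j, (L j)ᴴ * A * L j)
    (α : Fin N → ℂ) (hα : ∀ j, α j = (L j).trace / d)
    (M : Fin N → Matrix (Fin d) (Fin d) ℂ) (hM : ∀ j, M j = L j - α j • 1)
    (X : Matrix (Fin d) (Fin d) ℂ) (hX : X = ∑ j, (starRingEnd ℂ) (α j) • L j)
    (XI : Matrix (Fin d) (Fin d) ℂ) (hXI : XI = (2 * Complex.I)⁻¹ • (X - Xᴴ))
    (Y : Matrix (Fin d) (Fin d) ℂ) (hY : Y = -XI + (XI.trace / d) • 1) :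
    Y.IsHermitian ∧ Y.trace = 0 ∧ (∀ j, (M j).trace = 0) ∧
      ∀ A, Φ A = A + Complex.I • (Y * A - A * Y) +
        ∑ j, ((M j)ᴴ * A * M j -
          (2 : ℂ)⁻¹ • ((M j)ᴴ * M j * A + A * ((M j)ᴴ * M j))) := by
  have hcard : (Fintype.card (Fin d) : ℂ) ≠ 0 := by
    rw [Fintype.card_fin]
    exact_mod_cast (by omega : d ≠ 0)
  have hXI_im : XI = ℑ X := hXI.trans (inv_two_mul_I_smul_sub_star X)
  have hY_traceless : Y = -XI.tracelessPart := by
    rw [hY, Matrix.tracelessPart, Fintype.card_fin, neg_sub, neg_add_eq_sub]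
  have hM_traceless (j : Fin N) : M j = (L j).tracelessPart := by
    rw [hM, hα, Matrix.tracelessPart, Fintype.card_fin]
  refine ⟨?_, ?_, fun j => ?_, fun A => ?_⟩
  · rw [hY_traceless, hXI_im]
    exact ((ℑ X).2.isHermitian).tracelessPart.neg
  · rw [hY_traceless, Matrix.trace_neg, Matrix.trace_tracelessPart hcard, neg_zero]
  · rw [hM_traceless, Matrix.trace_tracelessPart hcard]
  · rw [hΦ, hY, hXI_im, add_smul_one_mul_sub_mul_add_smul_one]
    simpa only [Matrix.star_eq_conjTranspose] using
      sum_star_mul_mul_eq_gksl hcomplete hM hX A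

/-- Rewriting a unital Kraus-represented map in GKSL-like normal form: splitting each Kraus
operator into its trace part and traceless part `M_j`, the map `Φ(A) = Σ L_j† A L_j` equals
`A + i[Y,A] + Σ (M_j† A M_j − ½{M_j† M_j, A})` with `Y` traceless Hermitian. -/
theorem unital_kraus_gksl_normal_form (d N : ℕ) (hd : 1 ≤ d) (hN : 1 ≤ N)
    (L : Fin N → Matrix (Fin d) (Fin d) ℂ)
    (hcomplete : ∑ j, (L j)ᴴ * L j = 1)
    (Φ : Matrix (Fin d) (Fin d) ℂ → Matrix (Fin d) (Fin d) ℂ)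
    (hΦ : ∀ A, Φ A = ∑ j, (L j)ᴴ * A * L j)
    (α : Fin N → ℂ) (hα : ∀ j, α j = (L j).trace / d)
    (M : Fin N → Matrix (Fin d) (Fin d) ℂ) (hM : ∀ j, M j = L j - α j • 1)
    (X : Matrix (Fin d) (Fin d) ℂ) (hX : X = ∑ j, (starRingEnd ℂ) (α j) • L j)
    (XI : Matrix (Fin d) (Fin d) ℂ) (hXI : XI = (2 * Complex.I)⁻¹ • (X - Xᴴ))
    (Y : Matrix (Fin d) (Fin d) ℂ) (hY : Y = -XI + (XI.trace / d) • 1) :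
    Y.IsHermitian ∧ Y.trace = 0 ∧ (∀ j, (M j).trace = 0) ∧
      ∀ A, Φ A = A + Complex.I • (Y * A - A * Y) +
        ∑ j, ((M j)ᴴ * A * M j -
          (2 : ℂ)⁻¹ • ((M j)ᴴ * M j * A + A * ((M j)ᴴ * M j))) :=
  unital_kraus_gksl_normal_form_general d N hd L hcomplete Φ hΦ α hα M hM X hX XI hXI Y hY
end
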